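/- If a, b are distinct elements of a root basis Π with (a,b) < -1, then setting θ = cosh⁻¹(-(a,b)), for each integer i, (ρ_a ρ_b)^i a = (sinh((2i+1)θ)/sinh θ)·a + (sinh(2iθ)/sinh θ)·b, and ρ_a ρ_b has infinite order. -/

import Mathlib

open Real

variable {V : Type*} [AddCommGroup V] [Module ℝ V]

/-- The set of positive linear combinations of a set `A`. -/
def PLC (A : Set V) : Set V :=
  {v | ∃ (s : Finset V) (c : V → ℝ), (↑s : Set V) ⊆ A ∧ (∀ x ∈ s, 0 ≤ c x) ∧
    (∃ x ∈ s, 0 < c x) ∧ v = ∑ x ∈ s, c x • x}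

/-- A Coxeter datum (Krammer): a root basis `Pi` in `V` with bilinear form `B`. -/
structure CoxeterDatum (V : Type*) [AddCommGroup V] [Module ℝ V] where
  B : LinearMap.BilinForm ℝ V
  Pi : Set V
  norm_one : ∀ a ∈ Pi, B a a = 1
  symm : ∀ a ∈ Pi, ∀ b ∈ Pi, B a b = B b a
  offdiag : ∀ a ∈ Pi, ∀ b ∈ Pi, a ≠ b →
    (∃ m : ℕ, 2 ≤ m ∧ B a b = -Real.cos (Real.pi / m)) ∨ B a b ≤ -1
  zero_not_plc : (0 : V) ∉ PLC Pi

namespace CoxeterDatum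

variable (D : CoxeterDatum V)

/-- The reflection in the vector `a`, as a linear endomorphism of `V`. -/
noncomputable def refl (a : V) : Module.End ℝ V where
  toFun x := x - (2 * D.B x a) • a
  map_add' x y := by simp only [map_add, LinearMap.add_apply]; module
  map_smul' c x := by simp only [map_smul, LinearMap.smul_apply, smul_eq_mul,
    RingHom.id_apply]; module

/-- The set of simple reflections, as invertible endomorphisms of `V`. -/
def simples : Set (Module.End ℝ V)ˣ :=
  {u | ∃ a ∈ D.Pi, (u : Module.End ℝ V) = D.refl a}

/-- The Coxeter group `W`, realized as the group generated by the simple reflections. -/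
noncomputable def Wgrp : Subgroup (Module.End ℝ V)ˣ := Subgroup.closure D.simples

/-- The root system. -/
def roots : Set V :=
  {x | ∃ w ∈ D.Wgrp, ∃ a ∈ D.Pi, x = (w : Module.End ℝ V) a}

/-- The positive roots. -/
def posRoots : Set V := D.roots ∩ PLC D.Pi

/-- The negative roots. -/
def negRoots : Set V := {x | -x ∈ D.posRoots}

/-- The length of an element of `W` with respect to the simple reflections. -/
noncomputable def len (w : (Module.End ℝ V)ˣ) : ℕ :=
  sInf {n | ∃ l : List (Module.End ℝ V)ˣ,
    l.length = n ∧ (∀ u ∈ l, u ∈ D.simples) ∧ l.prod = w}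

/-- The depth of a root. -/
noncomputable def dp (x : V) : ℕ :=
  sInf {n | ∃ w ∈ D.Wgrp, D.len w = n ∧ (w : Module.End ℝ V) x ∈ D.negRoots}

/-- Dominance: `x` dominates `y` if every `w ∈ W` making `x` negative makes `y` negative. -/
def dom (x y : V) : Prop :=
  ∀ w ∈ D.Wgrp, (w : Module.End ℝ V) x ∈ D.negRoots → (w : Module.End ℝ V) y ∈ D.negRoots

/-- `D(x)`: the set of positive roots other than `x` dominated by `x`. -/
def DSet (x : V) : Set V := {y | y ∈ D.posRoots ∧ y ≠ x ∧ D.dom x y}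

/-- `D_n`: the set of positive roots dominating exactly `n` other positive roots. -/
def Dn (n : ℕ) : Set V :=
  {x | x ∈ D.posRoots ∧ (D.DSet x).Finite ∧ (D.DSet x).ncard = n}

/-- The set of reflections of `W`. -/
def TSet : Set (Module.End ℝ V)ˣ :=
  {t | ∃ w ∈ D.Wgrp, ∃ s ∈ D.simples, t = w * s * w⁻¹}

/-- `N(w)`: the set of positive roots sent to negative roots by `w`. -/
def NSet (w : (Module.End ℝ V)ˣ) : Set V :=
  {z | z ∈ D.posRoots ∧ (w : Module.End ℝ V) z ∈ D.negRoots}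

/-- `N̄(w)`: the reflections `t` with `ℓ(wt) < ℓ(w)`. -/
def Nbar (w : (Module.End ℝ V)ˣ) : Set (Module.End ℝ V)ˣ :=
  {t | t ∈ D.TSet ∧ D.len (w * t) < D.len w}

/-- The canonical generators of a reflection subgroup `W'`. -/
def canGens (W' : Subgroup (Module.End ℝ V)ˣ) : Set (Module.End ℝ V)ˣ :=
  {t | t ∈ D.TSet ∧ D.Nbar t ∩ (W' : Set (Module.End ℝ V)ˣ) = {t}}

/-- `S(x)`: elements of `W` of minimal length sending `x` into `Π` (inverse-wise). -/
def SSet (x : V) : Set (Module.End ℝ V)ˣ :=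
  {w | w ∈ D.Wgrp ∧ D.len w = D.dp x - 1 ∧ ((w⁻¹ : (Module.End ℝ V)ˣ) : Module.End ℝ V) x ∈ D.Pi}

end CoxeterDatum

/-!
Write `s k = sinh (k θ)`. The recurrence `s (k + 2) = 2 cosh θ · s (k + 1) - s k` says exactly that
`ρ_b` sends `s (k + 1) a + s k b` to `s (k + 1) a + s (k + 2) b`, and symmetrically for `ρ_a`; so
`ρ_a ρ_b` shifts the vectors `s (2i + 1) a + s (2i) b` from `i` to `i + 1`, and its powers act on
`a = (s 1 a + s 0 b) / s 1` by shifting the index. Since `(a, b)² ≠ 1`, the vectors `a, b` are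
linearly independent, and `s (2n) ≠ 0` for `n ≠ 0` rules out `(ρ_a ρ_b)^n a = a`.
-/

theorem Real.sinh_add_two_mul_eq_two_mul_cosh_mul_sub (t θ : ℝ) :
    sinh ((t + 2) * θ) = 2 * cosh θ * sinh ((t + 1) * θ) - sinh (t * θ) := by
  rw [show (t + 2) * θ = (t + 1) * θ + θ by ring, show t * θ = (t + 1) * θ - θ by ring,
    sinh_add, sinh_sub]
  ring

theorem Module.End.units_zpow_apply_of_apply_eq_succ {R M : Type*} [Semiring R]
    [AddCommMonoid M] [Module R M] (u : (Module.End R M)ˣ) (v : ℤ → M)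
    (h : ∀ j, (u : Module.End R M) (v j) = v (j + 1)) (i j : ℤ) :
    ((u ^ i : (Module.End R M)ˣ) : Module.End R M) (v j) = v (j + i) := by
  induction i using Int.induction_on generalizing j with
  | zero => simp
  | succ i ih => rw [zpow_add_one, Units.val_mul, Module.End.mul_apply, h, ih]; ring_nf
  | pred i ih =>
    have hinv : ((u⁻¹ : (Module.End R M)ˣ) : Module.End R M) (v j) = v (j - 1) := by
      rw [show v j = (u : Module.End R M) (v (j - 1)) by rw [h, sub_add_cancel],
        ← Module.End.mul_apply, ← Units.val_mul, inv_mul_cancel, Units.val_one,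
        Module.End.one_apply]
    rw [zpow_sub_one, Units.val_mul, Module.End.mul_apply, hinv, ih]; ring_nf

theorem LinearMap.BilinForm.linearIndependent_pair_of_det_ne_zero {K M : Type*} [Field K]
    [AddCommGroup M] [Module K M] (B : LinearMap.BilinForm K M) {x y : M}
    (h : B x x * B y y - B x y * B y x ≠ 0) : LinearIndependent K ![x, y] := by
  refine LinearIndependent.pair_iff.mpr fun s t hst => ?_
  have hx : s * B x x + t * B y x = 0 := by simpa using congrArg (B · x) hst
  have hy : s * B x y + t * B y y = 0 := by simpa using congrArg (B · y) hst
  constructor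
  · exact (mul_eq_zero.mp (by linear_combination B y y * hx - B y x * hy)).resolve_right h
  · exact (mul_eq_zero.mp (by linear_combination B x x * hy - B x y * hx)).resolve_right h

namespace CoxeterDatum

variable (D : CoxeterDatum V)

theorem refl_apply (a x : V) : D.refl a x = x - (2 * D.B x a) • a := rfl

theorem linearIndependent_of_B_lt_neg_one {a b : V} (ha : a ∈ D.Pi) (hb : b ∈ D.Pi)
    (hB : D.B a b < -1) : LinearIndependent ℝ ![a, b] := by
  refine D.B.linearIndependent_pair_of_det_ne_zero ?_
  rw [D.norm_one a ha, D.norm_one b hb, D.symm b hb a ha]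
  nlinarith

theorem refl_sinh_smul_add {a b : V} {θ : ℝ} (hb : D.B b b = 1) (hab : D.B a b = -cosh θ)
    (t : ℝ) : D.refl b (sinh ((t + 1) * θ) • a + sinh (t * θ) • b) =
      sinh ((t + 1) * θ) • a + sinh ((t + 2) * θ) • b := by
  have hpair : D.B (sinh ((t + 1) * θ) • a + sinh (t * θ) • b) b =
      -(cosh θ * sinh ((t + 1) * θ)) + sinh (t * θ) := by
    simp only [map_add, map_smul, LinearMap.add_apply, LinearMap.smul_apply, smul_eq_mul, hab, hb]
    ring
  rw [refl_apply, hpair, Real.sinh_add_two_mul_eq_two_mul_cosh_mul_sub]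
  module

theorem refl_refl_sinh_smul_add {a b : V} (ha : a ∈ D.Pi) (hb : b ∈ D.Pi) {θ : ℝ}
    (hθ : cosh θ = -D.B a b) (t : ℝ) :
    D.refl a (D.refl b (sinh ((t + 1) * θ) • a + sinh (t * θ) • b)) =
      sinh ((t + 3) * θ) • a + sinh ((t + 2) * θ) • b := by
  have hab : D.B a b = -cosh θ := by rw [hθ, neg_neg]
  have hba : D.B b a = -cosh θ := by rw [D.symm b hb a ha, hab]
  rw [D.refl_sinh_smul_add (D.norm_one b hb) hab, add_comm,
    show t + 2 = (t + 1) + 1 by ring, D.refl_sinh_smul_add (D.norm_one a ha) hba, add_comm]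
  ring_nf

end CoxeterDatum

theorem rank_two_infinite_order_hyperbolic_general (D : CoxeterDatum V) {a b : V}
    (ha : a ∈ D.Pi) (hb : b ∈ D.Pi) (hB : D.B a b < -1)
    (θ : ℝ) (hθpos : 0 < θ) (hθ : Real.cosh θ = -(D.B a b))
    (ua ub : (Module.End ℝ V)ˣ)
    (hua : (ua : Module.End ℝ V) = D.refl a) (hub : (ub : Module.End ℝ V) = D.refl b) :
    (∀ i : ℤ, (((ua * ub) ^ i : (Module.End ℝ V)ˣ) : Module.End ℝ V) a =
      (Real.sinh (((2 * i + 1 : ℤ) : ℝ) * θ) / Real.sinh θ) • a +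
      (Real.sinh (((2 * i : ℤ) : ℝ) * θ) / Real.sinh θ) • b) ∧
    ¬ IsOfFinOrder (ua * ub) := by
  set v : ℤ → V := fun i ↦
    sinh (((2 * i + 1 : ℤ) : ℝ) * θ) • a + sinh (((2 * i : ℤ) : ℝ) * θ) • b
  have hstep (i : ℤ) :
      ((ua * ub : (Module.End ℝ V)ˣ) : Module.End ℝ V) (v i) = v (i + 1) := by
    have := D.refl_refl_sinh_smul_add ha hb hθ (2 * i)
    simp only [v, Units.val_mul, Module.End.mul_apply, hua, hub]
    push_cast at this ⊢
    convert this using 4 <;> ring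
  have horbit (i : ℤ) :
      (((ua * ub) ^ i : (Module.End ℝ V)ˣ) : Module.End ℝ V) (sinh θ • a) = v i := by
    simpa [v] using Module.End.units_zpow_apply_of_apply_eq_succ _ v hstep i 0
  have hsinh : sinh θ ≠ 0 := (sinh_pos_iff.mpr hθpos).ne'
  refine ⟨fun i ↦ ?_, fun hfin ↦ ?_⟩
  · have := congrArg ((sinh θ)⁻¹ • ·) (horbit i)
    simp only [map_smul, inv_smul_smul₀ hsinh, v] at this
    rw [this, smul_add, smul_smul, smul_smul, div_eq_inv_mul, div_eq_inv_mul]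
  · obtain ⟨n, hn, hpow⟩ := isOfFinOrder_iff_pow_eq_one.mp hfin
    have hperiodic := horbit n
    rw [zpow_natCast, hpow, Units.val_one, Module.End.one_apply] at hperiodic
    have hindep := D.linearIndependent_of_B_lt_neg_one ha hb hB
    obtain ⟨-, hzero⟩ := LinearIndependent.pair_iff.mp hindep
      (sinh (((2 * n + 1 : ℤ) : ℝ) * θ) - sinh θ) (sinh (((2 * n : ℤ) : ℝ) * θ))
      (by rw [sub_smul, hperiodic]; simp only [v]; abel)
    exact (sinh_pos_iff.mpr (by push_cast; positivity)).ne' hzero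

/-- Proposition 1.2(ii), case `(a,b) < -1`, with `θ = cosh⁻¹(-(a,b))`. -/
theorem rank_two_infinite_order_hyperbolic (D : CoxeterDatum V) {a b : V}
    (ha : a ∈ D.Pi) (hb : b ∈ D.Pi) (hab : a ≠ b) (hB : D.B a b < -1)
    (θ : ℝ) (hθpos : 0 < θ) (hθ : Real.cosh θ = -(D.B a b))
    (ua ub : (Module.End ℝ V)ˣ)
    (hua : (ua : Module.End ℝ V) = D.refl a) (hub : (ub : Module.End ℝ V) = D.refl b) :
    (∀ i : ℤ, (((ua * ub) ^ i : (Module.End ℝ V)ˣ) : Module.End ℝ V) a =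
      (Real.sinh (((2 * i + 1 : ℤ) : ℝ) * θ) / Real.sinh θ) • a +
      (Real.sinh (((2 * i : ℤ) : ℝ) * θ) / Real.sinh θ) • b) ∧
    ¬ IsOfFinOrder (ua * ub) :=
  rank_two_infinite_order_hyperbolic_general D ha hb hB θ hθpos hθ ua ub hua hub
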